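/- For all real numbers s, t and p ≥ 1, one has (|s|^{p-1}s - |t|^{p-1}t)(s - t) ≥ 2^{1-p} |s - t|^{p+1}. -/

import Mathlib

/-!
Put `g(s) = |s|^{p-1} s` and assume `t ≤ s`; it suffices to show
`g(s) - g(t) ≥ 2^{1-p} (s - t)^p`. When `s` and `t` have the same sign, oddness of `g`
reduces this to `0 ≤ t`, where superadditivity of `x ↦ x^p` gives even
`g(s) - g(t) = s^p - t^p ≥ (s - t)^p`. When `t < 0 < s`, `g(s) - g(t) = s^p + (-t)^p`, and
convexity of `x ↦ x^p` (the power-mean inequality) bounds this below by `2^{1-p} (s - t)^p`.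
-/

open Real
open scoped NNReal

namespace Real

lemma rpow_add_rpow_le_rpow_add {p x y : ℝ} (hp : 1 ≤ p) (hx : 0 ≤ x) (hy : 0 ≤ y) :
    x ^ p + y ^ p ≤ (x + y) ^ p := by
  lift x to ℝ≥0 using hx
  lift y to ℝ≥0 using hy
  exact_mod_cast NNReal.add_rpow_le_rpow_add x y hp

lemma two_rpow_one_sub_mul_rpow_add_le {p x y : ℝ} (hp : 1 ≤ p) (hx : 0 ≤ x) (hy : 0 ≤ y) :
    (2 : ℝ) ^ (1 - p) * (x + y) ^ p ≤ x ^ p + y ^ p := by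
  lift x to ℝ≥0 using hx
  lift y to ℝ≥0 using hy
  have hmean : (x + y : ℝ) ^ p ≤ (2 : ℝ) ^ (p - 1) * (x ^ p + y ^ p) := by
    exact_mod_cast NNReal.rpow_add_le_mul_rpow_add_rpow x y hp
  have hinv : (2 : ℝ) ^ (1 - p) * (2 : ℝ) ^ (p - 1) = 1 := by
    rw [← rpow_add two_pos]; norm_num
  calc (2 : ℝ) ^ (1 - p) * (x + y : ℝ) ^ p
      ≤ (2 : ℝ) ^ (1 - p) * ((2 : ℝ) ^ (p - 1) * (x ^ p + y ^ p)) := by gcongr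
    _ = x ^ p + y ^ p := by rw [← mul_assoc, hinv, one_mul]

lemma two_rpow_one_sub_le_one {p : ℝ} (hp : 1 ≤ p) : (2 : ℝ) ^ (1 - p) ≤ 1 :=
  rpow_le_one_of_one_le_of_nonpos one_le_two (by linarith)

end Real

noncomputable def signedRpow (p s : ℝ) : ℝ := |s| ^ (p - 1) * s

namespace signedRpow

lemma neg (p s : ℝ) : signedRpow p (-s) = -signedRpow p s := by
  simp only [signedRpow, abs_neg, mul_neg]

lemma of_nonneg {p s : ℝ} (hp : p ≠ 0) (hs : 0 ≤ s) : signedRpow p s = s ^ p := by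
  rcases hs.eq_or_lt with rfl | hs
  · simp [signedRpow, zero_rpow hp]
  · rw [signedRpow, abs_of_pos hs, ← rpow_add_one hs.ne', sub_add_cancel]

lemma of_nonpos {p s : ℝ} (hp : p ≠ 0) (hs : s ≤ 0) : signedRpow p s = -(-s) ^ p := by
  rw [← of_nonneg hp (neg_nonneg.mpr hs), neg, neg_neg]

lemma rpow_sub_le_sub_of_nonneg {p s t : ℝ} (hp : 1 ≤ p) (ht : 0 ≤ t) (hts : t ≤ s) :
    (s - t) ^ p ≤ signedRpow p s - signedRpow p t := by
  have hp0 : p ≠ 0 := by positivity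
  have hsuper := rpow_add_rpow_le_rpow_add hp (sub_nonneg.mpr hts) ht
  rw [sub_add_cancel] at hsuper
  rw [of_nonneg hp0 (ht.trans hts), of_nonneg hp0 ht]
  linarith

lemma rpow_sub_le_sub_of_nonpos {p s t : ℝ} (hp : 1 ≤ p) (hs : s ≤ 0) (hts : t ≤ s) :
    (s - t) ^ p ≤ signedRpow p s - signedRpow p t := by
  have h := rpow_sub_le_sub_of_nonneg hp (neg_nonneg.mpr hs) (neg_le_neg hts)
  rwa [neg, neg, neg_sub_neg, neg_sub_neg] at h

lemma two_rpow_one_sub_mul_rpow_sub_le_sub {p s t : ℝ} (hp : 1 ≤ p) (hts : t ≤ s) :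
    (2 : ℝ) ^ (1 - p) * (s - t) ^ p ≤ signedRpow p s - signedRpow p t := by
  have hp0 : p ≠ 0 := by positivity
  have hweaken : (2 : ℝ) ^ (1 - p) * (s - t) ^ p ≤ (s - t) ^ p :=
    mul_le_of_le_one_left (rpow_nonneg (sub_nonneg.mpr hts) p) (two_rpow_one_sub_le_one hp)
  rcases le_total 0 t with ht | ht
  · exact hweaken.trans (rpow_sub_le_sub_of_nonneg hp ht hts)
  rcases le_total s 0 with hs | hs
  · exact hweaken.trans (rpow_sub_le_sub_of_nonpos hp hs hts)
  rw [of_nonneg hp0 hs, of_nonpos hp0 ht, sub_neg_eq_add, sub_eq_add_neg]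
  exact two_rpow_one_sub_mul_rpow_add_le hp hs (neg_nonneg.mpr ht)

lemma two_rpow_one_sub_mul_abs_sub_rpow_le (p s t : ℝ) (hp : 1 ≤ p) :
    (2 : ℝ) ^ (1 - p) * |s - t| ^ (p + 1) ≤ (signedRpow p s - signedRpow p t) * (s - t) := by
  wlog hts : t ≤ s generalizing s t
  · convert this t s (le_of_not_ge hts) using 1
    · rw [abs_sub_comm]
    · ring
  have hd : 0 ≤ s - t := sub_nonneg.mpr hts
  rw [abs_of_nonneg hd, rpow_add_one' hd (by linarith), ← mul_assoc]
  exact mul_le_mul_of_nonneg_right (two_rpow_one_sub_mul_rpow_sub_le_sub hp hts) hd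

end signedRpow

/-- For all reals `s, t` and `p ≥ 1`:
`(|s|^{p-1}s - |t|^{p-1}t)(s - t) ≥ 2^{1-p} |s-t|^{p+1}`. -/
theorem stmt6 (p : ℝ) (hp : 1 ≤ p) (s t : ℝ) :
    (2:ℝ) ^ (1 - p) * |s - t| ^ (p + 1) ≤
      (|s| ^ (p - 1) * s - |t| ^ (p - 1) * t) * (s - t) :=
  signedRpow.two_rpow_one_sub_mul_abs_sub_rpow_le p s t hp
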